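/- arXiv:1907.07268 — 3 statements merged into one kernel-verified Lean document; each statement's English description precedes it below -/
import Mathlib

section
/- Fix integers m ≥ 0 and s ≥ 0 and a partition μ. For an integer n ≥ |μ| + μ_1, let B(n) be the set of pairs (T, ν) where T is a standard Young tableau of shape μ[n] with des(T) ≤ n − m − 1, ν is a partition with at most n − m − des(T) − 1 parts, each part of size at most m, and maj(T) + |ν| = s. Then |B(n)| = |B(n+1)| for every integer n > max(2s + m + 1, |μ| + μ_1). (This is the combinatorial core of Theorem 1.5(2): for fixed m and homological degree d = 2s, the multiplicity of the irreducible S_n-module indexed by μ[n] in H_d(X_{n,n−m}) equals |B(n)|, so these multiplicities stabilize.) -/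
/-- The cells of the padded partition `μ[n] = (n - |μ|, μ₁, μ₂, …)`:
the first row has `n - |μ|` boxes, and row `i+1` is row `i` of `μ`. -/
def paddedCells (μ : YoungDiagram) (n : ℕ) : Finset (ℕ × ℕ) :=
  ((Finset.range (n - μ.card)).image fun j => ((0 : ℕ), j)) ∪
    (μ.cells.image fun c => (c.1 + 1, c.2))

/-- `T` is a standard Young tableau filling of the cell set `cells`:
it restricts to a bijection from the cells onto `{1, …, #cells}`,
is strictly increasing along rows and down columns, and is `0` off the cells. -/
structure IsSYT (cells : Finset (ℕ × ℕ)) (T : ℕ × ℕ → ℕ) : Prop where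
  bijOn : Set.BijOn T ↑cells (Set.Icc 1 cells.card)
  row_strict : ∀ c1 ∈ cells, ∀ c2 ∈ cells, c1.1 = c2.1 → c1.2 < c2.2 → T c1 < T c2
  col_strict : ∀ c1 ∈ cells, ∀ c2 ∈ cells, c1.2 = c2.2 → c1.1 < c2.1 → T c1 < T c2
  zeros : ∀ c, c ∉ cells → T c = 0

open Classical in
/-- The descent set of a filling: those `i` such that `i` appears in a row strictly
above (smaller row index than) the row containing `i + 1`. -/
noncomputable def descents (cells : Finset (ℕ × ℕ)) (T : ℕ × ℕ → ℕ) : Finset ℕ :=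
  (Finset.range (cells.card + 1)).filter fun i =>
    ∃ c1 ∈ cells, ∃ c2 ∈ cells, T c1 = i ∧ T c2 = i + 1 ∧ c1.1 < c2.1

/-- `des T`, the number of descents. -/
noncomputable def desN (cells : Finset (ℕ × ℕ)) (T : ℕ × ℕ → ℕ) : ℕ :=
  (descents cells T).card

/-- `maj T`, the sum of the descents. -/
noncomputable def majN (cells : Finset (ℕ × ℕ)) (T : ℕ × ℕ → ℕ) : ℕ :=
  ∑ i ∈ descents cells T, i

/-- The set `B(n)` of pairs `(T, ν)` where `T` is a standard Young tableau of
shape `μ[n]` with `des T ≤ n - m - 1`, and `ν` is a partition (encoded as an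
antitone function `ℕ → ℕ` listing its parts) with at most `n - m - des T - 1`
parts, each part at most `m`, such that `maj T + |ν| = s`. -/
def setB (μ : YoungDiagram) (m s n : ℕ) : Set ((ℕ × ℕ → ℕ) × (ℕ → ℕ)) :=
  { Tν | IsSYT (paddedCells μ n) Tν.1 ∧
      desN (paddedCells μ n) Tν.1 ≤ n - m - 1 ∧
      Antitone Tν.2 ∧
      (∀ i, n - m - desN (paddedCells μ n) Tν.1 - 1 ≤ i → Tν.2 i = 0) ∧
      (∀ i, Tν.2 i ≤ m) ∧
      majN (paddedCells μ n) Tν.1 + ∑ i ∈ Finset.range (n - m), Tν.2 i = s }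

/-!
For `n` large, filling the new box `(0, n - |μ|)` of `μ[n+1]` with `n + 1` is a bijection
`B(n) → B(n+1)` that keeps `ν`. The new entry creates no descent. Conversely, take `(T, ν)` in
`B(n+1)`: the entries larger than `maj T ≤ s` have no descents among them, so they form a
horizontal strip. That strip has `n + 1 - s > μ₁` entries, too many to fit into the `μ₁` columns
below row `0`; hence `n + 1` lies in row `0`, at its end, and can be removed. Once
`n > 2s + m + 1`, the conditions on `ν` no longer depend on `n`, since an antitone `ν` with
`|ν| ≤ s` has at most `s` nonzero parts.
-/

open Finset Function

lemma le_majN_of_mem_descents {cells : Finset (ℕ × ℕ)} {T : ℕ × ℕ → ℕ} {i : ℕ}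
    (hi : i ∈ descents cells T) : i ≤ majN cells T :=
  single_le_sum (f := id) (fun _ _ => Nat.zero_le _) hi

def IsOuterCorner (cells : Finset (ℕ × ℕ)) (w : ℕ × ℕ) : Prop :=
  (∀ c ∈ cells, c.1 = w.1 → c.2 < w.2) ∧ (∀ c ∈ cells, c.2 = w.2 → c.1 < w.1)

lemma IsOuterCorner.notMem {cells : Finset (ℕ × ℕ)} {w : ℕ × ℕ} (hw : IsOuterCorner cells w) :
    w ∉ cells :=
  fun h => (hw.1 w h rfl).false

namespace IsSYT

variable {cells : Finset (ℕ × ℕ)} {T : ℕ × ℕ → ℕ}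

lemma apply_mem_Icc (hT : IsSYT cells T) {c : ℕ × ℕ} (hc : c ∈ cells) :
    1 ≤ T c ∧ T c ≤ #cells :=
  hT.bijOn.mapsTo hc

lemma mem_descents_iff (hT : IsSYT cells T) {i : ℕ} :
    i ∈ descents cells T ↔
      ∃ c₁ ∈ cells, ∃ c₂ ∈ cells, T c₁ = i ∧ T c₂ = i + 1 ∧ c₁.1 < c₂.1 := by
  classical
  simp only [descents, mem_filter, mem_range, and_iff_right_iff_imp]
  rintro ⟨c₁, hc₁, -, -, rfl, -⟩
  have := (hT.apply_mem_Icc hc₁).2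
  omega

lemma one_le_of_mem_descents (hT : IsSYT cells T) {i : ℕ} (hi : i ∈ descents cells T) : 1 ≤ i := by
  obtain ⟨c₁, hc₁, -, -, rfl, -⟩ := hT.mem_descents_iff.1 hi
  exact (hT.apply_mem_Icc hc₁).1

lemma desN_le_majN (hT : IsSYT cells T) : desN cells T ≤ majN cells T := by
  rw [desN, majN, card_eq_sum_ones]
  exact sum_le_sum fun i hi => hT.one_le_of_mem_descents hi

lemma fst_le_of_descents_lt (hT : IsSYT cells T) {c c' : ℕ × ℕ} (hc : c ∈ cells)
    (hc' : c' ∈ cells) (hle : T c ≤ T c') (h : ∀ d ∈ descents cells T, d < T c) :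
    c'.1 ≤ c.1 := by
  obtain ⟨k, hk⟩ := Nat.exists_eq_add_of_le hle
  induction k generalizing c' with
  | zero => rw [hT.bijOn.injOn hc' hc hk]
  | succ k ih =>
    have hc'T := hT.apply_mem_Icc hc'
    have hcT := hT.apply_mem_Icc hc
    obtain ⟨c'', hc'', hTc''⟩ := hT.bijOn.surjOn (show T c + k ∈ Set.Icc 1 #cells by
      constructor <;> omega)
    have hrow := ih hc'' (by omega) hTc''
    have : ¬ c''.1 < c'.1 := fun hlt =>
      (h _ (hT.mem_descents_iff.2 ⟨c'', hc'', c', hc', rfl, by omega, hlt⟩)).not_ge (by omega)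
    omega

lemma snd_ne_of_descents_lt (hT : IsSYT cells T) {c c' : ℕ × ℕ} (hc : c ∈ cells)
    (hc' : c' ∈ cells) (hlt : T c < T c') (h : ∀ d ∈ descents cells T, d < T c) :
    c.2 ≠ c'.2 := by
  intro hcol
  rcases (hT.fst_le_of_descents_lt hc hc' hlt.le h).lt_or_eq with hrow | hrow
  · exact (hT.col_strict c' hc' c hc hcol.symm hrow).not_gt hlt
  · exact hlt.ne (congrArg T (Prod.ext hrow hcol.symm)).symm

lemma update_insert (hT : IsSYT cells T) {w : ℕ × ℕ} (hw : IsOuterCorner cells w) :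
    IsSYT (insert w cells) (update T w (#cells + 1)) := by
  have hne : ∀ c ∈ cells, c ≠ w := fun c hc h => hw.notMem (h ▸ hc)
  have hold : ∀ c ∈ cells, update T w (#cells + 1) c = T c := fun c hc =>
    update_of_ne (hne c hc) _ _
  refine ⟨?_, ?_, ?_, ?_⟩
  · have hbij := (hT.bijOn.congr fun c hc => (hold c hc).symm).insert
      (a := w) (by simp)
    rw [update_self] at hbij
    rwa [card_insert_of_notMem hw.notMem, coe_insert,
      ← Set.insert_Icc_right_eq_Icc_add_one (by omega)]
  · intro c₁ hc₁ c₂ hc₂ hrow hcol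
    rcases mem_insert.1 hc₁ with rfl | h₁ <;> rcases mem_insert.1 hc₂ with rfl | h₂
    · exact absurd hcol (lt_irrefl _)
    · exact absurd (hw.1 c₂ h₂ hrow.symm) hcol.not_gt
    · rw [update_self, hold c₁ h₁]; exact Nat.lt_succ_of_le (hT.apply_mem_Icc h₁).2
    · rw [hold c₁ h₁, hold c₂ h₂]; exact hT.row_strict c₁ h₁ c₂ h₂ hrow hcol
  · intro c₁ hc₁ c₂ hc₂ hcol hrow
    rcases mem_insert.1 hc₁ with rfl | h₁ <;> rcases mem_insert.1 hc₂ with rfl | h₂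
    · exact absurd hrow (lt_irrefl _)
    · exact absurd (hw.2 c₂ h₂ hcol.symm) hrow.not_gt
    · rw [update_self, hold c₁ h₁]; exact Nat.lt_succ_of_le (hT.apply_mem_Icc h₁).2
    · rw [hold c₁ h₁, hold c₂ h₂]; exact hT.col_strict c₁ h₁ c₂ h₂ hcol hrow
  · intro c hc
    rw [mem_insert, not_or] at hc
    rw [update_of_ne hc.1]
    exact hT.zeros c hc.2

lemma update_zero {w : ℕ × ℕ} (hT : IsSYT (insert w cells) T) (hw : IsOuterCorner cells w)
    (hTw : T w = #cells + 1) : IsSYT cells (update T w 0) := by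
  have hne : ∀ c ∈ cells, c ≠ w := fun c hc h => hw.notMem (h ▸ hc)
  have hold : ∀ c ∈ cells, update T w 0 c = T c := fun c hc => update_of_ne (hne c hc) _ _
  have hmem : ∀ c ∈ cells, c ∈ insert w cells := fun c hc => mem_insert_of_mem hc
  refine ⟨?_, fun c₁ hc₁ c₂ hc₂ hrow hcol => ?_, fun c₁ hc₁ c₂ hc₂ hcol hrow => ?_,
    fun c hc => ?_⟩
  · have hbij := hT.bijOn
    rw [card_insert_of_notMem hw.notMem, coe_insert,
      ← Set.insert_Icc_right_eq_Icc_add_one (by omega), ← hTw,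
      Set.BijOn.insert_iff hw.notMem (by simp [hTw])] at hbij
    exact hbij.congr fun c hc => (hold c hc).symm
  · rw [hold c₁ hc₁, hold c₂ hc₂]
    exact hT.row_strict c₁ (hmem c₁ hc₁) c₂ (hmem c₂ hc₂) hrow hcol
  · rw [hold c₁ hc₁, hold c₂ hc₂]
    exact hT.col_strict c₁ (hmem c₁ hc₁) c₂ (hmem c₂ hc₂) hcol hrow
  · by_cases h : c = w
    · rw [h, update_self]
    · rw [update_of_ne h]; exact hT.zeros c (by simp [h, hc])

lemma descents_update_insert (hT : IsSYT cells T) {w : ℕ × ℕ} (hw : IsOuterCorner cells w)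
    (hw₀ : w.1 = 0) : descents (insert w cells) (update T w (#cells + 1)) = descents cells T := by
  have hne : ∀ c ∈ cells, c ≠ w := fun c hc h => hw.notMem (h ▸ hc)
  have hold : ∀ c ∈ cells, update T w (#cells + 1) c = T c := fun c hc =>
    update_of_ne (hne c hc) _ _
  ext i
  rw [(hT.update_insert hw).mem_descents_iff, hT.mem_descents_iff]
  constructor
  · rintro ⟨c₁, hc₁, c₂, hc₂, rfl, h₂, hlt⟩
    rcases mem_insert.1 hc₂ with rfl | hc₂'
    · omega
    rcases mem_insert.1 hc₁ with rfl | hc₁'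
    · rw [update_self, hold c₂ hc₂'] at h₂
      have := (hT.apply_mem_Icc hc₂').2
      omega
    · exact ⟨c₁, hc₁', c₂, hc₂', (hold c₁ hc₁').symm, by rw [← hold c₂ hc₂', h₂], hlt⟩
  · rintro ⟨c₁, hc₁, c₂, hc₂, h₁, h₂, hlt⟩
    exact ⟨c₁, mem_insert_of_mem hc₁, c₂, mem_insert_of_mem hc₂, by rw [hold c₁ hc₁, h₁],
      by rw [hold c₂ hc₂, h₂], hlt⟩

end IsSYT

lemma YoungDiagram.rowLen_le_card (μ : YoungDiagram) (i : ℕ) : μ.rowLen i ≤ μ.card := by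
  rw [μ.rowLen_eq_card]
  exact card_le_card (filter_subset _ _)

section PaddedCells

variable {μ : YoungDiagram} {n : ℕ}

lemma mem_paddedCells {c : ℕ × ℕ} :
    c ∈ paddedCells μ n ↔ (c.1 = 0 ∧ c.2 < n - μ.card) ∨ (1 ≤ c.1 ∧ (c.1 - 1, c.2) ∈ μ) := by
  obtain ⟨i, j⟩ := c
  cases i <;> simp [paddedCells]

lemma snd_lt_rowLen_zero_of_mem_paddedCells {c : ℕ × ℕ} (hc : c ∈ paddedCells μ n)
    (h : 1 ≤ c.1) : c.2 < μ.rowLen 0 := by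
  rcases mem_paddedCells.1 hc with ⟨h0, -⟩ | ⟨-, hμ⟩
  · omega
  · exact (YoungDiagram.mem_iff_lt_rowLen.1 hμ).trans_le (μ.rowLen_anti 0 _ (Nat.zero_le _))

lemma card_paddedCells (h : μ.card ≤ n) : #(paddedCells μ n) = n := by
  rw [paddedCells, card_union_of_disjoint, card_image_of_injective, card_image_of_injective,
    card_range]
  · exact Nat.sub_add_cancel h
  · intro a b hab; simpa [Prod.ext_iff] using hab
  · intro a b hab; simpa [Prod.ext_iff] using hab
  · simp [disjoint_left]

lemma paddedCells_succ (h : μ.card ≤ n) :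
    paddedCells μ (n + 1) = insert (0, n - μ.card) (paddedCells μ n) := by
  ext ⟨i, j⟩
  cases i <;> simp [mem_paddedCells]
  omega

lemma isOuterCorner_paddedCells (h : μ.rowLen 0 ≤ n - μ.card) :
    IsOuterCorner (paddedCells μ n) (0, n - μ.card) := by
  refine ⟨fun c hc hrow => ?_, fun c hc hcol => ?_⟩
  · dsimp only at hrow ⊢
    rcases mem_paddedCells.1 hc with ⟨-, hlt⟩ | ⟨h1, -⟩
    · exact hlt
    · omega
  · dsimp only at hcol ⊢
    rcases mem_paddedCells.1 hc with ⟨-, hlt⟩ | ⟨h1, -⟩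
    · omega
    · have := snd_lt_rowLen_zero_of_mem_paddedCells hc h1
      omega

end PaddedCells

namespace IsSYT

variable {μ : YoungDiagram} {N s : ℕ} {T : ℕ × ℕ → ℕ}

lemma fst_eq_zero_of_apply_eq_card (hT : IsSYT (paddedCells μ N) T)
    (hmaj : majN (paddedCells μ N) T ≤ s) (hs : s + μ.rowLen 0 < #(paddedCells μ N))
    {c : ℕ × ℕ} (hc : c ∈ paddedCells μ N) (hTc : T c = #(paddedCells μ N)) : c.1 = 0 := by
  set P := paddedCells μ N
  set S := P.filter fun e => s < T e
  have hdes : ∀ e ∈ S, ∀ d ∈ descents P T, d < T e := fun e he d hd =>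
    ((le_majN_of_mem_descents hd).trans hmaj).trans_lt (mem_filter.1 he).2
  by_contra hc₀
  have hrow : ∀ e ∈ S, 1 ≤ e.1 := fun e he => by
    have := hT.fst_le_of_descents_lt (mem_filter.1 he).1 hc
      (hTc ▸ (hT.apply_mem_Icc (mem_filter.1 he).1).2) (hdes e he)
    omega
  have hlow : #(Icc (s + 1) #P) ≤ #S := card_le_card_of_surjOn T fun i hi => by
    rw [coe_Icc, Set.mem_Icc] at hi
    obtain ⟨e, he, rfl⟩ := hT.bijOn.surjOn (show i ∈ Set.Icc 1 #P from ⟨by omega, hi.2⟩)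
    exact ⟨e, mem_filter.2 ⟨he, hi.1⟩, rfl⟩
  have hup : #S ≤ #(range (μ.rowLen 0)) := by
    refine card_le_card_of_injOn Prod.snd (fun e he => ?_) fun e he e' he' hcol => ?_
    · exact mem_range.2 (snd_lt_rowLen_zero_of_mem_paddedCells (mem_filter.1 he).1 (hrow e he))
    · have he₁ := (mem_filter.1 he).1
      have he₁' := (mem_filter.1 he').1
      rcases lt_trichotomy (T e) (T e') with h | h | h
      · exact absurd hcol (hT.snd_ne_of_descents_lt he₁ he₁' h (hdes e he))
      · exact hT.bijOn.injOn he₁ he₁' h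
      · exact absurd hcol.symm (hT.snd_ne_of_descents_lt he₁' he₁ h (hdes e' he'))
  simp only [Nat.card_Icc, card_range] at hlow hup
  omega

lemma apply_corner_eq (hT : IsSYT (paddedCells μ (N + 1)) T) (hN : μ.card ≤ N)
    (hmaj : majN (paddedCells μ (N + 1)) T ≤ s) (hs : s + μ.rowLen 0 ≤ N) :
    T (0, N - μ.card) = N + 1 := by
  have hcard := card_paddedCells (μ := μ) (n := N + 1) (by omega)
  obtain ⟨c, hc, hTc⟩ := hT.bijOn.surjOn (show N + 1 ∈ Set.Icc 1 #(paddedCells μ (N + 1)) by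
    simp [hcard])
  have hc₀ := hT.fst_eq_zero_of_apply_eq_card hmaj (by omega) hc (hTc.trans hcard.symm)
  have hcorner : ((0 : ℕ), N - μ.card) ∈ paddedCells μ (N + 1) :=
    mem_paddedCells.2 (Or.inl ⟨rfl, by dsimp only; omega⟩)
  have hcol : c.2 = N - μ.card := by
    rcases mem_paddedCells.1 hc with ⟨-, hlt⟩ | ⟨h1, -⟩
    · by_contra hne
      have := hT.row_strict c hc _ hcorner hc₀ (by dsimp only; omega)
      have := (hT.apply_mem_Icc hcorner).2
      omega
    · omega
  have hc' : c = (0, N - μ.card) := Prod.ext hc₀ hcol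
  rwa [← hc']

end IsSYT

lemma Antitone.eq_zero_of_sum_range_le {ν : ℕ → ℕ} (hν : Antitone ν) {j k : ℕ} (hjk : j < k)
    (hsum : ∑ i ∈ range k, ν i ≤ j) {i : ℕ} (hi : j ≤ i) : ν i = 0 := by
  by_contra h
  have : j + 1 ≤ ∑ l ∈ range k, ν l := calc
    j + 1 = ∑ _l ∈ range (j + 1), 1 := by simp
    _ ≤ ∑ l ∈ range (j + 1), ν l := sum_le_sum fun l hl =>
      (Nat.one_le_iff_ne_zero.2 h).trans (hν (by have := mem_range.1 hl; omega))
    _ ≤ ∑ l ∈ range k, ν l := sum_le_sum_of_subset (range_subset_range.2 hjk)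
  omega

lemma sum_range_eq_of_eq_zero {ν : ℕ → ℕ} {j k : ℕ} (hjk : j ≤ k) (h : ∀ i, j ≤ i → ν i = 0) :
    ∑ i ∈ range k, ν i = ∑ i ∈ range j, ν i :=
  (sum_subset (range_subset_range.2 hjk) fun i _ hi => h i (by simpa using hi)).symm

section SetB

variable {μ : YoungDiagram} {m s n : ℕ}

lemma mem_setB_iff (h : 2 * s + m + 1 < n) {x : (ℕ × ℕ → ℕ) × (ℕ → ℕ)} :
    x ∈ setB μ m s n ↔ IsSYT (paddedCells μ n) x.1 ∧ Antitone x.2 ∧ (∀ i, x.2 i ≤ m) ∧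
      (∀ i, s ≤ i → x.2 i = 0) ∧ majN (paddedCells μ n) x.1 + ∑ i ∈ range s, x.2 i = s := by
  constructor
  · rintro ⟨hT, -, hν, -, hm, hsum⟩
    have hzero : ∀ i, s ≤ i → x.2 i = 0 := fun i =>
      hν.eq_zero_of_sum_range_le (j := s) (k := n - m) (by omega) (by omega)
    exact ⟨hT, hν, hm, hzero, by rwa [← sum_range_eq_of_eq_zero (k := n - m) (by omega) hzero]⟩
  · rintro ⟨hT, hν, hm, hzero, hsum⟩
    have := hT.desN_le_majN
    refine ⟨hT, by omega, hν, fun i hi => hzero i (by omega), hm, ?_⟩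
    rwa [sum_range_eq_of_eq_zero (by omega) hzero]

lemma bijOn_setB_succ (hs : 2 * s + m + 1 < n) (hμ : μ.card + μ.rowLen 0 ≤ n) :
    Set.BijOn (fun x => (update x.1 (0, n - μ.card) (n + 1), x.2))
      (setB μ m s n) (setB μ m s (n + 1)) := by
  have hsμ : s + μ.rowLen 0 ≤ n := by
    have := μ.rowLen_le_card 0
    omega
  set w : ℕ × ℕ := (0, n - μ.card)
  have hw : IsOuterCorner (paddedCells μ n) w := isOuterCorner_paddedCells (by omega)
  have hcard : #(paddedCells μ n) = n := card_paddedCells (by omega)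
  have hP : paddedCells μ (n + 1) = insert w (paddedCells μ n) := paddedCells_succ (by omega)
  have hext : ∀ T, IsSYT (paddedCells μ n) T →
      IsSYT (paddedCells μ (n + 1)) (update T w (n + 1)) ∧
        majN (paddedCells μ (n + 1)) (update T w (n + 1)) = majN (paddedCells μ n) T :=
    fun T hT => by
      have hT' := hT.update_insert hw
      have hdes := hT.descents_update_insert hw rfl
      rw [hcard, ← hP] at hT' hdes
      exact ⟨hT', by rw [majN, majN, hdes]⟩
  have hrestore : ∀ T, IsSYT (paddedCells μ n) T → update (update T w (n + 1)) w 0 = T :=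
    fun T hT => by rw [update_idem, update_eq_self_iff, hT.zeros w hw.notMem]
  refine ⟨fun x hx => ?_, fun x hx y hy hxy => ?_, fun y hy => ?_⟩
  · obtain ⟨hT, hν, hm, hzero, hsum⟩ := (mem_setB_iff hs).1 hx
    obtain ⟨hT', hmaj⟩ := hext x.1 hT
    exact (mem_setB_iff (by omega)).2 ⟨hT', hν, hm, hzero, hmaj ▸ hsum⟩
  · obtain ⟨hxy₁, hxy₂⟩ := Prod.ext_iff.1 hxy
    refine Prod.ext ?_ hxy₂
    rw [← hrestore x.1 hx.1, ← hrestore y.1 hy.1]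
    exact congrArg (update · w 0) hxy₁
  · obtain ⟨hT', hν, hm, hzero, hsum⟩ := (mem_setB_iff (by omega)).1 hy
    have hTw : y.1 w = n + 1 := hT'.apply_corner_eq (by omega) (by omega) hsμ
    have hT : IsSYT (paddedCells μ n) (update y.1 w 0) :=
      (hP ▸ hT').update_zero hw (by rw [hTw, hcard])
    have hy₁ : update (update y.1 w 0) w (n + 1) = y.1 := by
      rw [update_idem, ← hTw, update_eq_self]
    obtain ⟨-, hmaj⟩ := hext _ hT
    rw [hy₁] at hmaj
    exact ⟨(update y.1 w 0, y.2), (mem_setB_iff hs).2 ⟨hT, hν, hm, hzero, hmaj ▸ hsum⟩,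
      Prod.ext hy₁ rfl⟩

end SetB

/-- for fixed `m ≥ 0`, `s ≥ 0` and a partition `μ`,
`|B(n)| = |B(n+1)|` for every `n > max (2s + m + 1) (|μ| + μ₁)`. -/
theorem stmt1 (m s : ℕ) (μ : YoungDiagram) (n : ℕ)
    (hn : max (2 * s + m + 1) (μ.card + μ.rowLen 0) < n) :
    (setB μ m s n).ncard = (setB μ m s (n + 1)).ncard := by
  obtain ⟨hs, hμ⟩ := max_lt_iff.1 hn
  exact (bijOn_setB_succ hs hμ.le).ncard_eq
end

section
/- Let m ≥ 0 and let n ≤ n' be integers with m < n, and let f : Fin n → Fin n' be an injection. Then the algebra map φ_f sends the ideal I_{n',n'−m} ⊆ ℚ[x_1, …, x_{n'}] into the ideal I_{n,n−m} ⊆ ℚ[x_1, …, x_n], i.e., φ_f(I_{n',n'−m}) ⊆ I_{n,n−m}. (This is the key step showing that the degree pieces of the ideals I_{n,n−m} form a co-FI submodule for fixed m.) -/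
/-!
The map `φ_f` sends `x_{f i}` to `x_i` and kills every other variable, so it sends
`e_d(x_1, …, x_{n'})` to `e_d(x_1, …, x_n)` (the `d`-subsets leaving the image of `f` contribute
zero). Hence each generator of `I_{n',n'-m}` lands in `I_{n,n-m}`: a power `x_j^{n'-m}` goes to
`0` or to a multiple of `x_i^{n-m}`, and `e_d` with `d > m` goes to `e_d`, which is either a
generator of `I_{n,n-m}` or zero when `d > n`.
-/

/-- The ideal `I_{n,k} ⊆ ℚ[x_1, …, x_n]` generated by `x_1^k, …, x_n^k` together
with the elementary symmetric polynomials `e_n, e_{n-1}, …, e_{n-k+1}`. -/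
noncomputable def Idl (n k : ℕ) : Ideal (MvPolynomial (Fin n) ℚ) :=
  Ideal.span ((Set.range fun i : Fin n => MvPolynomial.X i ^ k) ∪
    ((fun d => MvPolynomial.esymm (Fin n) ℚ d) '' {d : ℕ | n - k + 1 ≤ d ∧ d ≤ n}))

/-- For an injection `f : Fin n → Fin n'`, the ℚ-algebra homomorphism
`φ_f : ℚ[x_1, …, x_{n'}] → ℚ[x_1, …, x_n]` with `φ_f(x_j) = x_i` if `j = f i`
and `φ_f(x_j) = 0` if `j` is not in the image of `f`. -/
noncomputable def phiMap {n n' : ℕ} (f : Fin n → Fin n') :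
    MvPolynomial (Fin n') ℚ →ₐ[ℚ] MvPolynomial (Fin n) ℚ :=
  MvPolynomial.aeval fun j : Fin n' =>
    if h : ∃ i, f i = j then MvPolynomial.X h.choose else 0

open MvPolynomial Finset

namespace MvPolynomial

theorem esymm_eq_zero_of_card_lt {σ R : Type*} [CommSemiring R] [Fintype σ] {d : ℕ}
    (hd : Fintype.card σ < d) : esymm σ R d = 0 := by
  rw [esymm, powersetCard_eq_empty.mpr (by simpa using hd), sum_empty]

end MvPolynomial

section phiMap

variable {n n' : ℕ} {f : Fin n → Fin n'}

theorem phiMap_X_apply (hf : Function.Injective f) (i : Fin n) :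
    phiMap f (X (f i)) = X i := by
  have hi : ∃ i', f i' = f i := ⟨i, rfl⟩
  rw [phiMap, aeval_X, dif_pos hi, hf hi.choose_spec]

theorem phiMap_X_of_notMem_range {j : Fin n'} (hj : j ∉ Set.range f) :
    phiMap f (X j) = 0 := by
  rw [phiMap, aeval_X]
  exact dif_neg hj

theorem phiMap_esymm (hf : Function.Injective f) (d : ℕ) :
    phiMap f (esymm (Fin n') ℚ d) = esymm (Fin n) ℚ d := by
  let e : Fin n ↪ Fin n' := ⟨f, hf⟩
  have hsub : powersetCard d (univ.map e) ⊆ powersetCard d univ :=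
    powersetCard_mono (subset_univ _)
  have hoff : ∀ t ∈ powersetCard d univ, t ∉ powersetCard d (univ.map e) →
      phiMap f (∏ j ∈ t, X j) = 0 := by
    intro t ht htn
    obtain ⟨j, hjt, hj⟩ := not_subset.mp fun h => htn (mem_powersetCard.mpr
      ⟨h, (mem_powersetCard.mp ht).2⟩)
    rw [map_prod]
    exact prod_eq_zero hjt (phiMap_X_of_notMem_range (by simpa [e] using hj))
  rw [esymm, esymm, map_sum, ← sum_subset hsub hoff, powersetCard_map, sum_map]
  refine sum_congr rfl fun s _ => ?_
  rw [RelEmbedding.coe_toEmbedding, mapEmbedding_apply, prod_map, map_prod]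
  exact prod_congr rfl fun i _ => phiMap_X_apply hf i

end phiMap

section Idl

variable {n k : ℕ}

theorem X_pow_mem_Idl (i : Fin n) {a : ℕ} (hka : k ≤ a) : X i ^ a ∈ Idl n k := by
  rw [← Nat.add_sub_cancel' hka, pow_add]
  exact Ideal.mul_mem_right _ _ (Ideal.subset_span (Or.inl ⟨i, rfl⟩))

theorem esymm_mem_Idl {d : ℕ} (hd : n - k < d) : esymm (Fin n) ℚ d ∈ Idl n k := by
  rcases le_or_gt d n with hdn | hnd
  · exact Ideal.subset_span (Or.inr ⟨d, ⟨hd, hdn⟩, rfl⟩)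
  · rw [esymm_eq_zero_of_card_lt (by simpa using hnd)]
    exact zero_mem _

theorem Idl_le_comap_phiMap {n' k' : ℕ} {f : Fin n → Fin n'} (hf : Function.Injective f)
    (hk : k ≤ k') (hk' : k' ≠ 0) (hcodim : n - k ≤ n' - k') :
    Idl n' k' ≤ (Idl n k).comap (phiMap f) := by
  rw [Idl, Ideal.span_le]
  rintro p (⟨j, rfl⟩ | ⟨d, ⟨hd, -⟩, rfl⟩) <;> simp only [SetLike.mem_coe, Ideal.mem_comap]
  · by_cases hj : j ∈ Set.range f
    · obtain ⟨i, rfl⟩ := hj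
      rw [map_pow, phiMap_X_apply hf]
      exact X_pow_mem_Idl i hk
    · rw [map_pow, phiMap_X_of_notMem_range hj, zero_pow hk']
      exact zero_mem _
  · rw [phiMap_esymm hf]
    exact esymm_mem_Idl (by omega)

end Idl

theorem stmt8_general (m n n' : ℕ) (hm : m < n)
    (f : Fin n → Fin n') (hf : Function.Injective f) :
    ∀ P ∈ Idl n' (n' - m), phiMap f P ∈ Idl n (n - m) := by
  have hnn' : n ≤ n' := Fin.le_of_injective f hf
  exact fun P hP => Idl_le_comap_phiMap hf (by omega) (by omega) (by omega) hP

/-- for `0 ≤ m < n ≤ n'` and an injection `f : Fin n → Fin n'`,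
the map `φ_f` sends the ideal `I_{n',n'-m}` into the ideal `I_{n,n-m}`. -/
theorem stmt8 (m n n' : ℕ) (hm : m < n) (hnn' : n ≤ n')
    (f : Fin n → Fin n') (hf : Function.Injective f) :
    ∀ P ∈ Idl n' (n' - m), phiMap f P ∈ Idl n (n - m) :=
  stmt8_general m n n' hm f hf
end

section
/- Let 0 ≤ m < n ≤ p ≤ r be integers and let f : {1,…,n} → {1,…,p} and g : {1,…,p} → {1,…,r} be injections. Then there exists an invertible ℂ-linear map B : ℂ^{r−m} → ℂ^{r−m} (depending only on f, g, m, n, p, r and not on the line configuration) such that for every n-tuple (ℓ_1, …, ℓ_n) of one-dimensional subspaces of ℂ^{n−m} and every index 1 ≤ j ≤ r, the image under B of the j-th line of ν_{g∘f}(ℓ_1, …, ℓ_n) equals the j-th line of ν_g(ν_f(ℓ_1, …, ℓ_n)); that is, B · ν_{g∘f} = ν_g ∘ ν_f as maps on tuples of lines. -/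
/-!
Both `ν_{g∘f}(ℓ)` and `ν_g(ν_f(ℓ))` put the line `ι(ℓ_i)`, which lies in the span of the first
`n - m` coordinates, at position `g (f i)`, and a coordinate line `span {e_k}` with `k ≥ n - m` at
every other position. A position outside the range of `g ∘ f` is either `g j'` with `j'` missing
from `f`, or missing from `g`; in either tuple distinct such positions get distinct coordinates
`k`. Hence the permutation matrix of any permutation of coordinates that fixes the first `n - m`
ones and sends the coordinates used by `ν_{g∘f}` to those used by `ν_g ∘ ν_f` is a valid `B`.
-/

/-- The linear inclusion `ℂ^a → ℂ^b` into the first `a` coordinates. -/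
noncomputable def iotaC (a b : ℕ) : (Fin a → ℂ) →ₗ[ℂ] (Fin b → ℂ) where
  toFun v := fun j => if h : (j : ℕ) < a then v ⟨(j : ℕ), h⟩ else 0
  map_add' u v := by funext j; by_cases h : (j : ℕ) < a <;> simp [h]
  map_smul' c v := by funext j; by_cases h : (j : ℕ) < a <;> simp [h]

/-- For `j` not in the image of `f`, `missingRank f j` is the number of elements
smaller than `j` which are not in the image of `f`; so if `j` is the `t`-th
smallest missing element (`t ≥ 1`) then `missingRank f j = t - 1`. -/
def missingRank {n p : ℕ} (f : Fin n → Fin p) (j : Fin p) : ℕ :=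
  (Finset.univ.filter fun j' : Fin p => j' < j ∧ ∀ i, f i ≠ j').card

/-- The map `ν_f` on tuples of subspaces: the `j`-th entry of
`ν_f (ℓ_1, …, ℓ_n)` is `ι(ℓ_i)` if `j = f i` (with `ι : ℂ^{n-m} → ℂ^{p-m}` the
inclusion into the first coordinates), and is the line spanned by the standard
basis vector `e_{t + n - m}` if `j = i_t` is the `t`-th smallest element outside
the image of `f` (all 1-indexed in the mathematical description; here encoded
0-indexed, so the basis vector has 0-based index `(n - m) + missingRank f j`). -/
noncomputable def nu (m n p : ℕ) (f : Fin n → Fin p)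
    (L : Fin n → Submodule ℂ (Fin (n - m) → ℂ)) :
    Fin p → Submodule ℂ (Fin (p - m) → ℂ) := fun j =>
  if h : ∃ i, f i = j then (L h.choose).map (iotaC (n - m) (p - m))
  else Submodule.span ℂ
    {fun a : Fin (p - m) => if (a : ℕ) = (n - m) + missingRank f j then (1 : ℂ) else 0}


open Function

lemma Fin.sub_le_sub_of_injective {a b : ℕ} {h : Fin a → Fin b} (hh : Injective h) (m : ℕ) :
    a - m ≤ b - m :=
  Nat.sub_le_sub_right (Fin.le_of_injective h hh) m

section MissingRank

variable {n p : ℕ} {f : Fin n → Fin p}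

lemma card_filter_forall_ne (hf : Injective f) :
    (Finset.univ.filter fun j : Fin p => ∀ i, f i ≠ j).card = p - n := by
  have : (Finset.univ.filter fun j : Fin p => ∀ i, f i ≠ j) = (Finset.univ.image f)ᶜ := by
    ext j; simp
  simp [this, Finset.card_compl, Finset.card_image_of_injective _ hf]

lemma missingRank_lt (hf : Injective f) {j : Fin p} (hj : j ∈ (Set.range f)ᶜ) :
    missingRank f j < p - n := by
  rw [← card_filter_forall_ne hf, missingRank]
  refine Finset.card_lt_card ((Finset.ssubset_iff_of_subset ?_).2 ⟨j, ?_, ?_⟩)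
  · intro x; simp only [Finset.mem_filter, Finset.mem_univ, true_and]; exact And.right
  · simpa using hj
  · simp

lemma missingRank_strictMonoOn : StrictMonoOn (missingRank f) (Set.range f)ᶜ := by
  intro a ha b _ hab
  refine Finset.card_lt_card ((Finset.ssubset_iff_of_subset ?_).2 ⟨a, ?_, ?_⟩)
  · intro x; simp only [Finset.mem_filter, Finset.mem_univ, true_and]
    exact fun h => ⟨h.1.trans hab, h.2⟩
  · simpa [hab] using ha
  · simp

variable (m : ℕ) (hmn : m ≤ n) (hf : Injective f)

def missingIndex (j : ↥(Set.range f)ᶜ) : Fin (p - m) :=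
  ⟨n - m + missingRank f j, by
    have := missingRank_lt hf j.2; have := Fin.le_of_injective f hf; omega⟩

lemma le_missingIndex (j : ↥(Set.range f)ᶜ) : n - m ≤ missingIndex m hmn hf j :=
  Nat.le_add_right _ _

lemma missingIndex_injective : Injective (missingIndex m hmn hf) := fun a b h =>
  Subtype.ext <| missingRank_strictMonoOn.injOn a.2 b.2 <| by
    simpa [missingIndex] using congrArg Fin.val h

end MissingRank

lemma iotaC_single {a b : ℕ} (hab : a ≤ b) (k : Fin a) (x : ℂ) :
    iotaC a b (Pi.single k x) = Pi.single (Fin.castLE hab k) x := by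
  funext j
  by_cases hj : (j : ℕ) < a
  · simp [iotaC, hj, Pi.single_apply, Fin.ext_iff]
  · have : (j : ℕ) ≠ k := by omega
    simp [iotaC, hj, Fin.ext_iff, this]

lemma iotaC_comp_iotaC {a b c : ℕ} (hab : a ≤ b) :
    iotaC b c ∘ₗ iotaC a b = iotaC a c := by
  ext v j
  by_cases hja : (j : ℕ) < a
  · simp [iotaC, hja, hja.trans_le hab]
  · simp [iotaC, hja]

section Nu

variable {m n p : ℕ} {f : Fin n → Fin p} (hf : Injective f)
  (L : Fin n → Submodule ℂ (Fin (n - m) → ℂ))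
include hf

lemma nu_apply_apply (i : Fin n) : nu m n p f L (f i) = (L i).map (iotaC (n - m) (p - m)) := by
  have h : ∃ i', f i' = f i := ⟨i, rfl⟩
  rw [nu, dif_pos h, hf h.choose_spec]

lemma nu_apply_of_mem_compl (hmn : m ≤ n) (j : ↥(Set.range f)ᶜ) :
    nu m n p f L j = Submodule.span ℂ {Pi.single (missingIndex m hmn hf j) 1} := by
  have h : ¬ ∃ i, f i = j := j.2
  rw [nu, dif_neg h]
  congr
  funext a
  simp [Pi.single_apply, missingIndex, Fin.ext_iff]

end Nu

lemma Equiv.Perm.exists_comp_eq {α β : Type*} [Finite β] {u v : α → β}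
    (hu : Injective u) (hv : Injective v) : ∃ σ : Equiv.Perm β, ∀ a, σ (u a) = v a := by
  classical
  refine ⟨((Equiv.ofInjective u hu).symm.trans (Equiv.ofInjective v hv)).extendSubtype,
    fun a => ?_⟩
  rw [Equiv.extendSubtype_apply_of_mem _ _ (Set.mem_range_self a)]
  simp

lemma LinearEquiv.funCongrLeft_single {R M ι κ : Type*} [Semiring R] [AddCommMonoid M]
    [Module R M] [DecidableEq ι] [DecidableEq κ] (e : κ ≃ ι) (i : ι) (x : M) :
    LinearEquiv.funCongrLeft R M e (Pi.single i x) = Pi.single (e.symm i) x :=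
  Pi.single_comp_equiv e i x

section Indices

variable {m n p r : ℕ} {f : Fin n → Fin p} {g : Fin p → Fin r}
  (hmn : m ≤ n) (hf : Injective f) (hg : Injective g)

def compMissing : ↥(Set.range f)ᶜ ⊕ ↥(Set.range g)ᶜ → ↥(Set.range (g ∘ f))ᶜ :=
  Sum.elim
    (fun j => ⟨g j, by rw [Set.range_comp]; exact fun h => j.2 (hg.mem_set_image.1 h)⟩)
    (fun j => ⟨j, fun h => j.2 (Set.range_comp_subset_range f g h)⟩)

lemma compMissing_injective : Injective (compMissing (f := f) hg) :=
  Injective.sumElim (fun _ _ h => Subtype.ext (hg (Subtype.ext_iff.1 h)))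
    (fun _ _ h => Subtype.val_injective (Subtype.ext_iff.1 h :))
    (fun a b h => b.2 ⟨a, congrArg Subtype.val h⟩)

lemma compMissing_surjective : Surjective (compMissing (f := f) hg) := by
  rintro ⟨j, hj⟩
  by_cases hjg : j ∈ Set.range g
  · obtain ⟨j', rfl⟩ := hjg
    exact ⟨.inl ⟨j', fun ⟨i, hi⟩ => hj ⟨i, by simp [hi]⟩⟩, rfl⟩
  · exact ⟨.inr ⟨j, hjg⟩, rfl⟩

/- The coordinates used by `ν_{g∘f}` (`sourceIndex`) and by `ν_g ∘ ν_f` (`targetIndex`), both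
indexed by the `n - m` coordinates carrying the lines `ι(ℓ_i)` and the two kinds of positions
missing from `g ∘ f`; `B` will send `sourceIndex x` to `targetIndex x`. -/
def sourceIndex : Fin (n - m) ⊕ (↥(Set.range f)ᶜ ⊕ ↥(Set.range g)ᶜ) → Fin (r - m) :=
  Sum.elim (Fin.castLE (Fin.sub_le_sub_of_injective (hg.comp hf) m))
    (missingIndex m hmn (hg.comp hf) ∘ compMissing hg)

def targetIndex : Fin (n - m) ⊕ (↥(Set.range f)ᶜ ⊕ ↥(Set.range g)ᶜ) → Fin (r - m) :=
  Sum.elim (Fin.castLE (Fin.sub_le_sub_of_injective (hg.comp hf) m))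
    (Sum.elim (Fin.castLE (Fin.sub_le_sub_of_injective hg m) ∘
        missingIndex m hmn hf)
      (missingIndex m (hmn.trans (Fin.le_of_injective f hf)) hg))

lemma sourceIndex_injective : Injective (sourceIndex hmn hf hg) :=
  (Fin.castLE_injective _).sumElim
    ((missingIndex_injective m hmn _).comp (compMissing_injective hg))
    (fun k j h => by
      have := le_missingIndex m hmn (hg.comp hf) (compMissing hg j)
      have hval := congrArg Fin.val h
      simp only [Fin.val_castLE, comp_apply] at hval
      omega)

lemma targetIndex_injective : Injective (targetIndex hmn hf hg) := by
  refine (Fin.castLE_injective _).sumElim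
    (((Fin.castLE_injective _).comp (missingIndex_injective m hmn hf)).sumElim
      (missingIndex_injective m _ hg) fun j j' h => ?_) fun k j h => ?_
  · have := (missingIndex m hmn hf j).2
    have := le_missingIndex m (hmn.trans (Fin.le_of_injective f hf)) hg j'
    have hval := congrArg Fin.val h
    simp only [Fin.val_castLE, comp_apply] at hval
    omega
  · have hval := congrArg Fin.val h
    rcases j with j | j
    · have := le_missingIndex m hmn hf j
      simp only [Fin.val_castLE, Sum.elim_inl, comp_apply] at hval
      omega
    · have := le_missingIndex m (hmn.trans (Fin.le_of_injective f hf)) hg j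
      have := Fin.le_of_injective f hf
      simp only [Fin.val_castLE, Sum.elim_inr] at hval
      omega

variable (L : Fin n → Submodule ℂ (Fin (n - m) → ℂ))

include hf hg in
lemma nu_nu_apply_apply (i : Fin n) :
    nu m p r g (nu m n p f L) (g (f i)) = (L i).map (iotaC (n - m) (r - m)) := by
  rw [nu_apply_apply hg, nu_apply_apply hf, ← Submodule.map_comp,
    iotaC_comp_iotaC (Fin.sub_le_sub_of_injective hf m)]

lemma nu_nu_apply_compMissing (x : ↥(Set.range f)ᶜ ⊕ ↥(Set.range g)ᶜ) :
    nu m p r g (nu m n p f L) (compMissing hg x) =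
      Submodule.span ℂ {Pi.single (targetIndex hmn hf hg (.inr x)) 1} := by
  rcases x with j | j
  · rw [compMissing, Sum.elim_inl, nu_apply_apply hg, nu_apply_of_mem_compl hf L hmn,
      Submodule.map_span, Set.image_singleton,
      iotaC_single (Fin.sub_le_sub_of_injective hg m)]
    rfl
  · exact nu_apply_of_mem_compl hg _ (hmn.trans (Fin.le_of_injective f hf)) j

end Indices

lemma funCongrLeft_symm_comp_iotaC {a b : ℕ} (hab : a ≤ b) (σ : Equiv.Perm (Fin b))
    (hσ : ∀ k, σ (Fin.castLE hab k) = Fin.castLE hab k) :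
    (LinearEquiv.funCongrLeft ℂ ℂ σ.symm).toLinearMap ∘ₗ iotaC a b = iotaC a b :=
  LinearMap.pi_ext fun k x => by
    rw [LinearMap.comp_apply, iotaC_single hab, LinearEquiv.coe_coe,
      LinearEquiv.funCongrLeft_single, Equiv.symm_symm, hσ]

theorem stmt15_general (m n p r : ℕ) (hm : m < n)
    (f : Fin n → Fin p) (hf : Function.Injective f)
    (g : Fin p → Fin r) (hg : Function.Injective g) :
    ∃ B : (Fin (r - m) → ℂ) ≃ₗ[ℂ] (Fin (r - m) → ℂ),
      ∀ L : Fin n → Submodule ℂ (Fin (n - m) → ℂ),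
        (∀ i, Module.finrank ℂ (L i) = 1) →
        ∀ j : Fin r,
          (nu m n r (g ∘ f) L j).map B.toLinearMap = nu m p r g (nu m n p f L) j := by
  obtain ⟨σ, hσ⟩ := Equiv.Perm.exists_comp_eq (sourceIndex_injective hm.le hf hg)
    (targetIndex_injective hm.le hf hg)
  refine ⟨LinearEquiv.funCongrLeft ℂ ℂ σ.symm, fun L _ j => ?_⟩
  by_cases hj : j ∈ Set.range (g ∘ f)
  · obtain ⟨i, rfl⟩ := hj
    rw [nu_apply_apply (hg.comp hf), comp_apply, nu_nu_apply_apply hf hg L, ← Submodule.map_comp,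
      funCongrLeft_symm_comp_iotaC (Fin.sub_le_sub_of_injective (hg.comp hf) m) σ
        fun k => hσ (.inl k)]
  · obtain ⟨x, hx⟩ := compMissing_surjective hg ⟨j, hj⟩
    obtain rfl : (compMissing hg x : Fin r) = j := congrArg Subtype.val hx
    rw [nu_apply_of_mem_compl (hg.comp hf) L hm.le, Submodule.map_span, Set.image_singleton,
      LinearEquiv.coe_coe, LinearEquiv.funCongrLeft_single, Equiv.symm_symm,
      nu_nu_apply_compMissing hm.le hf hg]
    exact congrArg (fun k => Submodule.span ℂ {Pi.single k 1}) (hσ (.inr x))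

/-- for `0 ≤ m < n ≤ p ≤ r` and injections `f : Fin n → Fin p`,
`g : Fin p → Fin r`, there is an invertible linear map `B` of `ℂ^{r-m}`,
depending only on `f, g, m, n, p, r`, such that for every `n`-tuple of
one-dimensional subspaces of `ℂ^{n-m}` and every index `j`, applying `B` to the
`j`-th line of `ν_{g∘f}(ℓ)` gives the `j`-th line of `ν_g(ν_f(ℓ))`. -/
theorem stmt15 (m n p r : ℕ) (hm : m < n) (hnp : n ≤ p) (hpr : p ≤ r)
    (f : Fin n → Fin p) (hf : Function.Injective f)
    (g : Fin p → Fin r) (hg : Function.Injective g) :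
    ∃ B : (Fin (r - m) → ℂ) ≃ₗ[ℂ] (Fin (r - m) → ℂ),
      ∀ L : Fin n → Submodule ℂ (Fin (n - m) → ℂ),
        (∀ i, Module.finrank ℂ (L i) = 1) →
        ∀ j : Fin r,
          (nu m n r (g ∘ f) L j).map B.toLinearMap = nu m p r g (nu m n p f L) j :=
  stmt15_general m n p r hm f hf g hg
end
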